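/- Let Y be a mean zero random variable with variance σ² ∈ (0,∞), and let Y* be defined on the same probability space and have the Y-zero biased distribution. Suppose |Y* − Y| ≤ c almost surely for some constant c > 0, and that the moment generating function m(s) = E[exp(sY)] is finite for all s ∈ (−2/c, 0]. Then for all t ≥ 0, P(Y ≤ −t) ≤ exp(−t² / (10σ²/3 + ct)). -/

import Mathlib

/-!
Write `m` for the moment generating function of `Y`. The zero-bias identity applied to
`f y = exp (u * y)` gives `m' u = σ² u E[exp (u Y*)]`, and for `u ≤ 0` the bound `Y* ≥ Y - c` gives
`E[exp (u Y*)] ≤ exp (-u c) m u`. Hence `m' u ≥ σ² exp (-s c) u m u` on `[s, 0]`, and integrating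
back from `m 0 = 1` yields `m s ≤ exp (σ² exp (-s c) s² / 2)`. The Chernoff bound at `s = -t / D`,
`D = 5σ²/3 + ct/2`, concludes: `s > -2/c`, and `σ² exp (ct / D) ≤ D` because
`(2 - x) exp x ≤ e < 10/3`.
-/

open MeasureTheory ProbabilityTheory Real

/-- `Ystar` has the `Y`-zero biased distribution with respect to variance `σ2`:
`E[Y f(Y)] = σ2 * E[f'(Ystar)]` for every (absolutely continuous) differentiable
function `f` with derivative `f'` for which both expectations exist. -/
def ZeroBiased {Ω : Type*} [MeasurableSpace Ω] (μ : Measure Ω)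
    (Y Ystar : Ω → ℝ) (σ2 : ℝ) : Prop :=
  ∀ f f' : ℝ → ℝ, (∀ x, HasDerivAt f (f' x) x) →
    Integrable (fun ω => Y ω * f (Y ω)) μ →
    Integrable (fun ω => f' (Ystar ω)) μ →
    ∫ ω, Y ω * f (Y ω) ∂μ = σ2 * ∫ ω, f' (Ystar ω) ∂μ

lemma exp_mul_le_exp_mul_add_exp_mul {a b t : ℝ} (x : ℝ) (hat : a ≤ t) (htb : t ≤ b) :
    exp (t * x) ≤ exp (a * x) + exp (b * x) := by
  rcases le_total 0 x with hx | hx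
  · linarith [exp_le_exp.2 (mul_le_mul_of_nonneg_right htb hx), exp_pos (a * x)]
  · linarith [exp_le_exp.2 (mul_le_mul_of_nonpos_right hat hx), exp_pos (b * x)]

lemma le_mul_exp_of_mul_le_deriv {f f' : ℝ → ℝ} {a b B : ℝ} (hab : a ≤ b)
    (hf : ContinuousOn f (Set.Icc a b)) (hderiv : ∀ u ∈ Set.Ioo a b, HasDerivAt f (f' u) u)
    (hle : ∀ u ∈ Set.Ioo a b, B * u * f u ≤ f' u) :
    f a ≤ f b * exp (B * (a ^ 2 - b ^ 2) / 2) := by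
  let g : ℝ → ℝ := fun u => f u * exp (-(B * u ^ 2 / 2))
  have hg_deriv : ∀ u ∈ Set.Ioo a b,
      HasDerivAt g ((f' u - B * u * f u) * exp (-(B * u ^ 2 / 2))) u := by
    intro u hu
    have hexponent : HasDerivAt (fun u : ℝ => -(B * u ^ 2 / 2)) (-(B * u)) u :=
      (((hasDerivAt_pow 2 u).const_mul B).div_const 2).fun_neg.congr_deriv (by ring)
    exact ((hderiv u hu).fun_mul hexponent.exp).congr_deriv (by ring)
  have hg_mono : MonotoneOn g (Set.Icc a b) := by
    refine monotoneOn_of_hasDerivWithinAt_nonneg (convex_Icc a b)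
      (f' := fun u => (f' u - B * u * f u) * exp (-(B * u ^ 2 / 2)))
      (hf.mul (by fun_prop)) (fun u hu => ?_) (fun u hu => ?_) <;> rw [interior_Icc] at hu
    · exact (hg_deriv u hu).hasDerivWithinAt
    · exact mul_nonneg (sub_nonneg.2 (hle u hu)) (exp_pos _).le
  have hgab : g a ≤ g b := hg_mono (Set.left_mem_Icc.2 hab) (Set.right_mem_Icc.2 hab) hab
  calc f a = g a * exp (B * a ^ 2 / 2) := by simp only [g, mul_assoc, ← exp_add]; simp
    _ ≤ g b * exp (B * a ^ 2 / 2) := by gcongr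
    _ = f b * exp (B * (a ^ 2 - b ^ 2) / 2) := by
        simp only [g, mul_assoc, ← exp_add]; congr 2; ring

section MGF

variable {Ω : Type*} [MeasurableSpace Ω] {μ : Measure Ω}

lemma continuousOn_mgf_Icc {X : Ω → ℝ} {a b : ℝ} (ha : Integrable (fun ω => exp (a * X ω)) μ)
    (hb : Integrable (fun ω => exp (b * X ω)) μ) : ContinuousOn (mgf X μ) (Set.Icc a b) :=
  continuousOn_of_dominated (bound := fun ω => exp (a * X ω) + exp (b * X ω))
    (fun u hu => (integrable_exp_mul_of_le_of_le ha hb hu.1 hu.2).aestronglyMeasurable)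
    (fun u hu => ae_of_all _ fun ω => by
      rw [norm_eq_abs, abs_exp]; exact exp_mul_le_exp_mul_add_exp_mul _ hu.1 hu.2)
    (ha.add hb) (ae_of_all _ fun ω => by fun_prop)

lemma ae_exp_mul_le_of_sub_le {X Z : Ω → ℝ} {c u : ℝ} (hu : u ≤ 0)
    (hXZ : ∀ᵐ ω ∂μ, X ω - c ≤ Z ω) :
    ∀ᵐ ω ∂μ, exp (u * Z ω) ≤ exp (-(u * c)) * exp (u * X ω) := by
  filter_upwards [hXZ] with ω hω
  rw [← exp_add, exp_le_exp]
  nlinarith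

lemma integrable_exp_mul_of_sub_le {X Z : Ω → ℝ} {c u : ℝ} (hZ : AEMeasurable Z μ) (hu : u ≤ 0)
    (hXZ : ∀ᵐ ω ∂μ, X ω - c ≤ Z ω) (hX : Integrable (fun ω => exp (u * X ω)) μ) :
    Integrable (fun ω => exp (u * Z ω)) μ := by
  refine (hX.const_mul (exp (-(u * c)))).mono' (by fun_prop) ?_
  filter_upwards [ae_exp_mul_le_of_sub_le hu hXZ] with ω hω
  rwa [norm_eq_abs, abs_exp]

lemma mgf_le_exp_mul_mgf_of_sub_le {X Z : Ω → ℝ} {c u : ℝ} (hu : u ≤ 0)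
    (hXZ : ∀ᵐ ω ∂μ, X ω - c ≤ Z ω) (hX : Integrable (fun ω => exp (u * X ω)) μ) :
    mgf Z μ u ≤ exp (-(u * c)) * mgf X μ u := by
  rw [mgf, mgf, ← integral_const_mul]
  exact integral_mono_of_nonneg (ae_of_all _ fun ω => (exp_pos _).le)
    (hX.const_mul _) (ae_exp_mul_le_of_sub_le hu hXZ)

lemma ZeroBiased.integral_mul_exp {Y Ystar : Ω → ℝ} {σ2 : ℝ} (hzb : ZeroBiased μ Y Ystar σ2)
    (u : ℝ) (hY : Integrable (fun ω => Y ω * exp (u * Y ω)) μ)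
    (hYstar : Integrable (fun ω => exp (u * Ystar ω)) μ) :
    μ[fun ω => Y ω * exp (u * Y ω)] = σ2 * u * mgf Ystar μ u := by
  have hderiv (x : ℝ) : HasDerivAt (fun y => exp (u * y)) (u * exp (u * x)) x :=
    ((hasDerivAt_id x).const_mul u).exp.congr_deriv (by simp [mul_comm])
  rw [hzb _ _ hderiv hY (hYstar.const_mul u), integral_const_mul, mul_assoc, mgf]

theorem ZeroBiased.mgf_le_exp [IsProbabilityMeasure μ] {Y Ystar : Ω → ℝ} {σ2 c s : ℝ}
    (hzb : ZeroBiased μ Y Ystar σ2) (hYstar : AEMeasurable Ystar μ) (hσ2 : 0 ≤ σ2) (hc : 0 ≤ c)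
    (hbdd : ∀ᵐ ω ∂μ, Y ω - c ≤ Ystar ω) (hs : s ≤ 0)
    (hint : Integrable (fun ω => exp (s * Y ω)) μ) :
    mgf Y μ s ≤ exp (σ2 * exp (-(s * c)) * s ^ 2 / 2) := by
  have hIcc : Set.Icc s 0 ⊆ integrableExpSet Y μ := fun u hu =>
    integrable_exp_mul_of_nonpos_of_ge hint hu.2 hu.1
  have hIoo : Set.Ioo s 0 ⊆ interior (integrableExpSet Y μ) := by
    rw [← interior_Icc]; exact interior_mono hIcc
  have key := le_mul_exp_of_mul_le_deriv hs (continuousOn_mgf_Icc hint (by simp))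
    (fun u hu => hasDerivAt_mgf (hIoo hu)) (B := σ2 * exp (-(s * c))) ?_
  · simpa using key
  intro u hu
  have hu_int : Integrable (fun ω => exp (u * Y ω)) μ := hIcc (Set.Ioo_subset_Icc_self hu)
  have hσu : σ2 * u ≤ 0 := mul_nonpos_of_nonneg_of_nonpos hσ2 hu.2.le
  rw [hzb.integral_mul_exp u
    (by simpa using integrable_pow_mul_exp_of_mem_interior_integrableExpSet (hIoo hu) 1)
    (integrable_exp_mul_of_sub_le hYstar hu.2.le hbdd hu_int)]
  calc σ2 * exp (-(s * c)) * u * mgf Y μ u = σ2 * u * (exp (-(s * c)) * mgf Y μ u) := by ring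
    _ ≤ σ2 * u * (exp (-(u * c)) * mgf Y μ u) := by
        refine mul_le_mul_of_nonpos_left ?_ hσu
        gcongr
        · exact mgf_nonneg
        · nlinarith [hu.1]
    _ ≤ σ2 * u * mgf Ystar μ u :=
        mul_le_mul_of_nonpos_left (mgf_le_exp_mul_mgf_of_sub_le hu.2.le hbdd hu_int) hσu

end MGF

lemma sub_mul_exp_le_exp_one (x : ℝ) : (2 - x) * exp x ≤ exp 1 :=
  calc (2 - x) * exp x ≤ exp (1 - x) * exp x := by
        gcongr; linarith [add_one_le_exp (1 - x)]
    _ = exp 1 := by rw [← exp_add, sub_add_cancel]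

lemma mul_exp_div_le {σ2 a D : ℝ} (hσ2 : 0 < σ2) (ha : 0 ≤ a) (hD : D = 5 * σ2 / 3 + a / 2) :
    σ2 * exp (a / D) ≤ D := by
  have hD0 : 0 < D := by rw [hD]; positivity
  set x := a / D with hx
  have hDx : (2 - x) * D = 10 * σ2 / 3 := by
    rw [sub_mul, hx, div_mul_cancel₀ _ hD0.ne', hD]; ring
  have hx2 : 0 < 2 - x := pos_of_mul_pos_left (hDx ▸ by positivity) hD0.le
  have he : exp 1 ≤ 10 / 3 := by linarith [exp_one_lt_d9]
  refine le_of_mul_le_mul_left ?_ hx2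
  calc (2 - x) * (σ2 * exp x) = σ2 * ((2 - x) * exp x) := by ring
    _ ≤ σ2 * (10 / 3) := by gcongr; exact (sub_mul_exp_le_exp_one x).trans he
    _ = (2 - x) * D := by rw [hDx]; ring

lemma chernoff_exponent_le {σ2 c t D s : ℝ} (hσ2 : 0 < σ2) (hc : 0 ≤ c) (ht : 0 ≤ t)
    (hD : D = 5 * σ2 / 3 + c * t / 2) (hs : s = -t / D) :
    s * t + σ2 * exp (-(s * c)) * s ^ 2 / 2 ≤ -(t ^ 2) / (10 * σ2 / 3 + c * t) := by
  have hD0 : 0 < D := by rw [hD]; positivity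
  have hsc : -(s * c) = c * t / D := by rw [hs]; ring
  have hE := mul_exp_div_le hσ2 (mul_nonneg hc ht) hD
  rw [hsc, show 10 * σ2 / 3 + c * t = 2 * D by rw [hD]; ring, hs]
  calc -t / D * t + σ2 * exp (c * t / D) * (-t / D) ^ 2 / 2
      = -t ^ 2 / D + σ2 * exp (c * t / D) * (t ^ 2 / (2 * D ^ 2)) := by ring
    _ ≤ -t ^ 2 / D + D * (t ^ 2 / (2 * D ^ 2)) := by gcongr
    _ = -t ^ 2 / (2 * D) := by field_simp; ring

theorem zero_bias_left_tail_abs_general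
    {Ω : Type*} [MeasurableSpace Ω] (μ : Measure Ω) [IsProbabilityMeasure μ]
    (Y Ystar : Ω → ℝ) (hYstar : Measurable Ystar)
    (σ2 : ℝ) (hσ2 : 0 < σ2)
    (hzb : ZeroBiased μ Y Ystar σ2)
    (c : ℝ) (hc : 0 < c)
    (hbdd : ∀ᵐ ω ∂μ, |Ystar ω - Y ω| ≤ c)
    (hmgf : ∀ s ∈ Set.Ioc (-(2 / c)) (0 : ℝ), Integrable (fun ω => exp (s * Y ω)) μ) :
    ∀ t : ℝ, 0 ≤ t →
      (μ {ω | Y ω ≤ -t}).toReal ≤ exp (-(t ^ 2) / (10 * σ2 / 3 + c * t)) := by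
  intro t ht
  set D := 5 * σ2 / 3 + c * t / 2 with hD
  set s := -t / D with hs
  have hD0 : 0 < D := by positivity
  have hs_mem : s ∈ Set.Ioc (-(2 / c)) 0 := by
    refine ⟨?_, div_nonpos_of_nonpos_of_nonneg (neg_nonpos.2 ht) hD0.le⟩
    rw [hs, neg_div, neg_lt_neg_iff, div_lt_div_iff₀ hD0 hc, hD]
    nlinarith
  have hint := hmgf s hs_mem
  have hmgf_le : mgf Y μ s ≤ exp (σ2 * exp (-(s * c)) * s ^ 2 / 2) :=
    hzb.mgf_le_exp hYstar.aemeasurable hσ2.le hc.le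
      (hbdd.mono fun ω hω => by linarith [(abs_le.1 hω).1]) hs_mem.2 hint
  calc (μ {ω | Y ω ≤ -t}).toReal ≤ exp (-s * -t) * mgf Y μ s :=
        measure_le_le_exp_mul_mgf (-t) hs_mem.2 hint
    _ ≤ exp (s * t) * exp (σ2 * exp (-(s * c)) * s ^ 2 / 2) := by rw [neg_mul_neg]; gcongr
    _ = exp (s * t + σ2 * exp (-(s * c)) * s ^ 2 / 2) := (exp_add _ _).symm
    _ ≤ exp (-(t ^ 2) / (10 * σ2 / 3 + c * t)) :=
        exp_le_exp.2 (chernoff_exponent_le hσ2 hc.le ht hD hs)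

theorem zero_bias_left_tail_abs
    {Ω : Type*} [MeasurableSpace Ω] (μ : Measure Ω) [IsProbabilityMeasure μ]
    (Y Ystar : Ω → ℝ) (hY : Measurable Y) (hYstar : Measurable Ystar)
    (σ2 : ℝ) (hσ2 : 0 < σ2)
    (hmean : ∫ ω, Y ω ∂μ = 0) (hL2 : MemLp Y 2 μ) (hvar : variance Y μ = σ2)
    (hzb : ZeroBiased μ Y Ystar σ2)
    (c : ℝ) (hc : 0 < c)
    (hbdd : ∀ᵐ ω ∂μ, |Ystar ω - Y ω| ≤ c)
    (hmgf : ∀ s ∈ Set.Ioc (-(2 / c)) (0 : ℝ), Integrable (fun ω => exp (s * Y ω)) μ) :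
    ∀ t : ℝ, 0 ≤ t →
      (μ {ω | Y ω ≤ -t}).toReal ≤ exp (-(t ^ 2) / (10 * σ2 / 3 + c * t)) :=
  zero_bias_left_tail_abs_general μ Y Ystar hYstar σ2 hσ2 hzb c hc hbdd hmgf
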